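/- Let A : Fin n → α and B : Fin m → α be monotone (non-decreasing) sequences in a linear order α, and let C : Fin (n + m) → α be the function determined by C(i + rankLow(A i, B)) = A i for all i : Fin n and C(j + rankHigh(B j, A)) = B j for all j : Fin m (well-defined since these positions form a bijection with Fin (n+m)). Then C is monotone (non-decreasing); i.e., the merge output determined by the low/high cross ranks is a correctly sorted merge of A and B. -/

import Mathlib

/-- `rankLow x B` is the number of elements of `B` that are strictly less than `x`. -/
def rankLow {α : Type*} [LinearOrder α] {m : ℕ} (x : α) (B : Fin m → α) : ℕ :=
  (Finset.univ.filter fun j => B j < x).card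

/-- `rankHigh x A` is the number of elements of `A` that are less than or equal to `x`. -/
def rankHigh {α : Type*} [LinearOrder α] {n : ℕ} (x : α) (A : Fin n → α) : ℕ :=
  (Finset.univ.filter fun i => A i ≤ x).card

/-!
Put `A i` at position `i + rankLow (A i) B` and `B j` at position `j + rankHigh (B j) A`.
By monotonicity, `rankLow (A i) B` counts the `B j` placed before `A i` and `rankHigh (B j) A`
counts the `A i` placed before `B j`, ties being broken in favour of `A`. Hence a strictly
smaller value always gets a strictly smaller position. In particular the positions are pairwise
distinct, so they fill `Fin (n + m)`, and reading `C` along them can never decrease.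
-/

open Finset

section Ranks

variable {α : Type*} [LinearOrder α] {n m : ℕ}

lemma Fin.card_filter_le_of_forall_lt {p : Fin m → Prop} [DecidablePred p] {j : Fin m}
    (h : ∀ k, p k → k < j) : #(univ.filter p) ≤ j := by
  calc #(univ.filter p) ≤ #(Iio j) := card_le_card fun k hk => mem_Iio.2 (h k (mem_filter.1 hk).2)
    _ = j := Fin.card_Iio j

lemma Fin.lt_card_filter_of_forall_le {p : Fin m → Prop} [DecidablePred p] {j : Fin m}
    (h : ∀ k ≤ j, p k) : (j : ℕ) < #(univ.filter p) := by
  calc (j : ℕ) < #(Iic j) := by rw [Fin.card_Iic]; exact Nat.lt_succ_self j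
    _ ≤ #(univ.filter p) := card_le_card fun k hk => by simpa using h k (mem_Iic.1 hk)

lemma rankLow_le_card (x : α) (B : Fin m → α) : rankLow x B ≤ m :=
  (card_filter_le _ _).trans_eq (card_fin m)

lemma rankHigh_le_card (x : α) (A : Fin n → α) : rankHigh x A ≤ n :=
  (card_filter_le _ _).trans_eq (card_fin n)

lemma rankLow_mono (B : Fin m → α) : Monotone (rankLow · B) := fun _ _ hxy =>
  card_le_card <| monotone_filter_right _ fun _ _ hj => hj.trans_le hxy

lemma rankHigh_mono (A : Fin n → α) : Monotone (rankHigh · A) := fun _ _ hxy =>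
  card_le_card <| monotone_filter_right _ fun _ _ hi => hi.trans hxy

lemma rankLow_le_of_le {B : Fin m → α} (hB : Monotone B) {x : α} {j : Fin m} (h : x ≤ B j) :
    rankLow x B ≤ j :=
  Fin.card_filter_le_of_forall_lt fun _ hk => hB.reflect_lt (hk.trans_le h)

lemma lt_rankLow_of_lt {B : Fin m → α} (hB : Monotone B) {x : α} {j : Fin m} (h : B j < x) :
    (j : ℕ) < rankLow x B :=
  Fin.lt_card_filter_of_forall_le fun _ hk => (hB hk).trans_lt h

lemma rankHigh_le_of_lt {A : Fin n → α} (hA : Monotone A) {x : α} {i : Fin n} (h : x < A i) :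
    rankHigh x A ≤ i :=
  Fin.card_filter_le_of_forall_lt fun _ hk => hA.reflect_lt (hk.trans_lt h)

lemma lt_rankHigh_of_le {A : Fin n → α} (hA : Monotone A) {x : α} {i : Fin n} (h : A i ≤ x) :
    (i : ℕ) < rankHigh x A :=
  Fin.lt_card_filter_of_forall_le fun _ hk => (hA hk).trans h

end Ranks

section MergePos

variable {α : Type*} [LinearOrder α] {n m : ℕ} {A : Fin n → α} {B : Fin m → α}

def mergePos (A : Fin n → α) (B : Fin m → α) : Fin n ⊕ Fin m → Fin (n + m)
  | .inl i => ⟨i + rankLow (A i) B, by have := rankLow_le_card (A i) B; omega⟩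
  | .inr j => ⟨j + rankHigh (B j) A, by have := rankHigh_le_card (B j) A; omega⟩

lemma mergePos_inl_lt_inl (hA : Monotone A) {i i' : Fin n} (h : i < i') :
    mergePos A B (.inl i) < mergePos A B (.inl i') := by
  have : rankLow (A i) B ≤ rankLow (A i') B := rankLow_mono B (hA h.le)
  simp only [mergePos, Fin.mk_lt_mk]
  omega

lemma mergePos_inr_lt_inr (hB : Monotone B) {j j' : Fin m} (h : j < j') :
    mergePos A B (.inr j) < mergePos A B (.inr j') := by
  have : rankHigh (B j) A ≤ rankHigh (B j') A := rankHigh_mono A (hB h.le)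
  simp only [mergePos, Fin.mk_lt_mk]
  omega

lemma mergePos_inl_lt_inr (hA : Monotone A) (hB : Monotone B) {i : Fin n} {j : Fin m}
    (h : A i ≤ B j) : mergePos A B (.inl i) < mergePos A B (.inr j) := by
  have := rankLow_le_of_le hB h
  have := lt_rankHigh_of_le hA h
  simp only [mergePos, Fin.mk_lt_mk]
  omega

lemma mergePos_inr_lt_inl (hA : Monotone A) (hB : Monotone B) {i : Fin n} {j : Fin m}
    (h : B j < A i) : mergePos A B (.inr j) < mergePos A B (.inl i) := by
  have := lt_rankLow_of_lt hB h
  have := rankHigh_le_of_lt hA h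
  simp only [mergePos, Fin.mk_lt_mk]
  omega

lemma mergePos_lt_mergePos_of_lt (hA : Monotone A) (hB : Monotone B) {x y : Fin n ⊕ Fin m}
    (h : Sum.elim A B x < Sum.elim A B y) : mergePos A B x < mergePos A B y := by
  rcases x with i | j <;> rcases y with i' | j'
  · exact mergePos_inl_lt_inl hA (hA.reflect_lt h)
  · exact mergePos_inl_lt_inr hA hB h.le
  · exact mergePos_inr_lt_inl hA hB h
  · exact mergePos_inr_lt_inr hB (hB.reflect_lt h)

lemma mergePos_inl_ne_inr (hA : Monotone A) (hB : Monotone B) (i : Fin n) (j : Fin m) :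
    mergePos A B (.inl i) ≠ mergePos A B (.inr j) := by
  rcases le_or_gt (A i) (B j) with h | h
  exacts [(mergePos_inl_lt_inr hA hB h).ne, (mergePos_inr_lt_inl hA hB h).ne']

lemma mergePos_injective (hA : Monotone A) (hB : Monotone B) :
    Function.Injective (mergePos A B) := by
  rintro (i | j) (i' | j') h
  · exact congrArg Sum.inl <| StrictMono.injective (fun _ _ => mergePos_inl_lt_inl hA) h
  · exact absurd h (mergePos_inl_ne_inr hA hB i j')
  · exact absurd h.symm (mergePos_inl_ne_inr hA hB i' j)
  · exact congrArg Sum.inr <| StrictMono.injective (fun _ _ => mergePos_inr_lt_inr hB) h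

lemma mergePos_bijective (hA : Monotone A) (hB : Monotone B) :
    Function.Bijective (mergePos A B) :=
  (Fintype.bijective_iff_injective_and_card _).2 ⟨mergePos_injective hA hB, by simp⟩

end MergePos

/-- If `C : Fin (n + m) → α` places `A i` at position `i + rankLow (A i) B` and `B j` at
position `j + rankHigh (B j) A`, then `C` is monotone: the merge output determined by
the cross ranks is a correctly sorted merge of `A` and `B`. -/
theorem merge_output_monotone {α : Type*} [LinearOrder α] {n m : ℕ}
    (A : Fin n → α) (B : Fin m → α) (hA : Monotone A) (hB : Monotone B)
    (C : Fin (n + m) → α)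
    (hCA : ∀ (i : Fin n) (k : Fin (n + m)),
      (k : ℕ) = (i : ℕ) + rankLow (A i) B → C k = A i)
    (hCB : ∀ (j : Fin m) (k : Fin (n + m)),
      (k : ℕ) = (j : ℕ) + rankHigh (B j) A → C k = B j) :
    Monotone C := by
  have hC : ∀ x, C (mergePos A B x) = Sum.elim A B x := by
    rintro (i | j)
    exacts [hCA i _ rfl, hCB j _ rfl]
  intro k k' hkk'
  obtain ⟨x, rfl⟩ := (mergePos_bijective hA hB).surjective k
  obtain ⟨y, rfl⟩ := (mergePos_bijective hA hB).surjective k'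
  rw [hC, hC]
  exact le_of_not_gt fun hyx => (mergePos_lt_mergePos_of_lt hA hB hyx).not_ge hkk'
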